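/- Every maximal execution of the MD2IS algorithm under a serial central daemon (a maximal sequence of single-vertex moves by enabled vertices) is finite and terminates in a configuration where no vertex is enabled, and in that configuration S = {v : state(v)=In} is a maximal distance-2 independent set. -/
import Mathlib


variable {V : Type*} [Fintype V] [DecidableEq V]

/-- `S` is a distance-2 independent set: any two distinct vertices of `S`
are at graph distance strictly greater than 2. -/
def Dist2Indep (G : SimpleGraph V) (S : Set V) : Prop :=
  ∀ u ∈ S, ∀ v ∈ S, u ≠ v → 2 < G.edist u v

/-- `exp G s u` counts the neighbors of `u` whose state is `In` (`true`). -/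
def expIn (G : SimpleGraph V) [DecidableRel G.Adj] (s : V → Bool) (u : V) : ℕ :=
  ((G.neighborFinset u).filter (fun w => s w = true)).card

/-- Guard of rule R1 at `v`: `v` is Out and every neighbor is Out with exp 0. -/
def R1guard (G : SimpleGraph V) [DecidableRel G.Adj] (s : V → Bool) (v : V) : Prop :=
  s v = false ∧ ∀ u ∈ G.neighborSet v, s u = false ∧ expIn G s u = 0

/-- Guard of rule R2 at `v`: `v` is In and some neighbor is In or has exp > 1. -/
def R2guard (G : SimpleGraph V) [DecidableRel G.Adj] (s : V → Bool) (v : V) : Prop :=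
  s v = true ∧ ∃ u ∈ G.neighborSet v, s u = true ∨ 1 < expIn G s u
/-- One move of the algorithm: vertex `v` fires R1 (becoming In) or R2 (becoming Out). -/
def Step (G : SimpleGraph V) [DecidableRel G.Adj] (s s' : V → Bool) (v : V) : Prop :=
  (R1guard G s v ∧ s' = Function.update s v true) ∨
  (R2guard G s v ∧ s' = Function.update s v false)

/-- A vertex is enabled if one of the guards holds at it. -/
def Enabled (G : SimpleGraph V) [DecidableRel G.Adj] (s : V → Bool) (v : V) : Prop :=
  R1guard G s v ∨ R2guard G s v

/-! ### Auxiliary lemmas -/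

lemma expIn_eq_zero_iff {G : SimpleGraph V} [DecidableRel G.Adj] {s : V → Bool} {u : V} :
    expIn G s u = 0 ↔ ∀ x ∈ G.neighborFinset u, s x = false := by
  simp [expIn, Finset.card_eq_zero, Finset.filter_eq_empty_iff]

lemma two_le_expIn {G : SimpleGraph V} [DecidableRel G.Adj] {s : V → Bool} {u x y : V}
    (hx : G.Adj u x) (hy : G.Adj u y) (hsx : s x = true) (hsy : s y = true) (hxy : x ≠ y) :
    2 ≤ expIn G s u := by
  have hsub : ({x, y} : Finset V) ⊆ (G.neighborFinset u).filter (fun w => s w = true) := by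
    intro z hz
    rcases Finset.mem_insert.mp hz with rfl | hz
    · simp [hx, hsx]
    · rcases Finset.mem_singleton.mp hz with rfl
      simp [hy, hsy]
  calc 2 = ({x, y} : Finset V).card := by
        rw [Finset.card_insert_of_notMem (by simp [hxy]), Finset.card_singleton]
  _ ≤ _ := Finset.card_le_card hsub

lemma expIn_mono {G : SimpleGraph V} [DecidableRel G.Adj] {s s' : V → Bool} (u : V)
    (h : ∀ x, s' x = true → s x = true) : expIn G s' u ≤ expIn G s u := by
  apply Finset.card_le_card
  intro x hx
  simp only [Finset.mem_filter] at hx ⊢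
  exact ⟨hx.1, h x hx.2⟩

lemma expIn_congr {G : SimpleGraph V} [DecidableRel G.Adj] {s s' : V → Bool} (u : V)
    (h : ∀ x ∈ G.neighborFinset u, s' x = s x) : expIn G s' u = expIn G s u := by
  unfold expIn
  congr 1
  apply Finset.filter_congr
  intro x hx
  rw [h x hx]

/-- The set of "frozen" In vertices: In, with all neighbors Out and of exposure ≤ 1. -/
def Fset (G : SimpleGraph V) [DecidableRel G.Adj] (s : V → Bool) : Finset V :=
  Finset.univ.filter (fun w => s w = true ∧ ∀ u ∈ G.neighborFinset w, s u = false ∧ expIn G s u ≤ 1)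

lemma mem_Fset {G : SimpleGraph V} [DecidableRel G.Adj] {s : V → Bool} {w : V} :
    w ∈ Fset G s ↔ s w = true ∧ ∀ u ∈ G.neighborFinset w, s u = false ∧ expIn G s u ≤ 1 := by
  simp [Fset]

/-- Number of In vertices. -/
def InCount (s : V → Bool) : ℕ := (Finset.univ.filter (fun x => s x = true)).card

/-- The potential function. -/
def phi (G : SimpleGraph V) [DecidableRel G.Adj] (s : V → Bool) : ℕ :=
  (Fintype.card V + 1) * (Fintype.card V - (Fset G s).card) + InCount s

lemma step_phi_lt {G : SimpleGraph V} [DecidableRel G.Adj] {s s' : V → Bool} {v : V}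
    (h : Step G s s' v) : phi G s' < phi G s := by
  set N := Fintype.card V with hN
  rcases h with ⟨⟨hv, hnb⟩, rfl⟩ | ⟨⟨hv, u₀, hu₀, hcase⟩, rfl⟩
  · -- R1 move
    set s' := Function.update s v true with hs'
    have hsub : Fset G s ⊆ Fset G s' := by
      intro w hw
      rw [mem_Fset] at hw ⊢
      obtain ⟨hw1, hw2⟩ := hw
      have hvw : ¬ G.Adj v w := by
        intro hadj
        have := (hnb w hadj).1
        rw [hw1] at this; exact Bool.noConfusion this
      have hwv : w ≠ v := by
        rintro rfl; rw [hv] at hw1; exact Bool.noConfusion hw1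
      refine ⟨by rwa [hs', Function.update_of_ne hwv], ?_⟩
      intro u hu
      have hadj : G.Adj w u := (SimpleGraph.mem_neighborFinset _ _ _).mp hu
      have huv : ¬ G.Adj u v := by
        intro hadj2
        have h0 := (hnb u hadj2.symm).2
        have := expIn_eq_zero_iff.mp h0 w ((SimpleGraph.mem_neighborFinset _ _ _).mpr hadj.symm)
        rw [hw1] at this; exact Bool.noConfusion this
      have hunev : u ≠ v := by rintro rfl; exact hvw hadj.symm
      have hcongr : ∀ x ∈ G.neighborFinset u, s' x = s x := by
        intro x hx
        have : x ≠ v := by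
          rintro rfl; exact huv ((SimpleGraph.mem_neighborFinset _ _ _).mp hx)
        rw [hs', Function.update_of_ne this]
      refine ⟨?_, ?_⟩
      · rw [hs', Function.update_of_ne hunev]; exact (hw2 u hu).1
      · rw [expIn_congr u hcongr]; exact (hw2 u hu).2
    have hvmem : v ∈ Fset G s' := by
      rw [mem_Fset]
      refine ⟨by rw [hs', Function.update_self], ?_⟩
      intro u hu
      have hadj : G.Adj v u := (SimpleGraph.mem_neighborFinset _ _ _).mp hu
      have hunev : u ≠ v := fun h => G.irrefl (h ▸ hadj)
      refine ⟨by rw [hs', Function.update_of_ne hunev]; exact (hnb u hadj).1, ?_⟩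
      have hfil : (G.neighborFinset u).filter (fun w => s' w = true) ⊆ {v} := by
        intro x hx
        simp only [Finset.mem_filter] at hx
        by_contra hxv
        rw [Finset.mem_singleton] at hxv
        have hx2 := hx.2
        rw [hs', Function.update_of_ne hxv] at hx2
        have := expIn_eq_zero_iff.mp (hnb u hadj).2 x hx.1
        rw [hx2] at this; exact Bool.noConfusion this
      calc expIn G s' u ≤ ({v} : Finset V).card := Finset.card_le_card hfil
      _ = 1 := Finset.card_singleton v
    have hvnot : v ∉ Fset G s := by
      rw [mem_Fset]; rintro ⟨h1, -⟩; rw [hv] at h1; exact Bool.noConfusion h1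
    have hcard : (Fset G s).card < (Fset G s').card :=
      Finset.card_lt_card ⟨hsub, fun h => hvnot (h hvmem)⟩
    have hle : (Fset G s').card ≤ N := Finset.card_le_univ _
    have hnle : InCount s' ≤ N := Finset.card_le_univ _
    have hmul : (N + 1) * (N - (Fset G s').card) + (N + 1) ≤ (N + 1) * (N - (Fset G s).card) := by
      rw [← Nat.mul_succ]
      exact Nat.mul_le_mul_left _ (by omega)
    simp only [phi, ← hN]
    omega
  · -- R2 move
    set s' := Function.update s v false with hs'
    have hmono : ∀ x, s' x = true → s x = true := by
      intro x hx
      by_cases hxv : x = v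
      · subst hxv; rw [hs', Function.update_self] at hx; exact Bool.noConfusion hx
      · rwa [hs', Function.update_of_ne hxv] at hx
    have hsub : Fset G s ⊆ Fset G s' := by
      intro w hw
      rw [mem_Fset] at hw ⊢
      obtain ⟨hw1, hw2⟩ := hw
      have hwv : w ≠ v := by
        rintro rfl
        have := hw2 u₀ ((SimpleGraph.mem_neighborFinset _ _ _).mpr hu₀)
        rcases hcase with hc | hc
        · rw [this.1] at hc; exact Bool.noConfusion hc
        · omega
      refine ⟨by rwa [hs', Function.update_of_ne hwv], ?_⟩
      intro u hu
      have hunev : u ≠ v := by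
        rintro rfl
        have := (hw2 u hu).1
        rw [hv] at this; exact Bool.noConfusion this
      refine ⟨by rw [hs', Function.update_of_ne hunev]; exact (hw2 u hu).1, ?_⟩
      calc expIn G s' u ≤ expIn G s u := expIn_mono u hmono
      _ ≤ 1 := (hw2 u hu).2
    have hIn : InCount s' < InCount s := by
      apply Finset.card_lt_card
      constructor
      · intro x hx
        simp only [Finset.mem_filter, Finset.mem_univ, true_and] at hx ⊢
        exact hmono x hx
      · intro h
        have hvmem : v ∈ Finset.univ.filter (fun x => s x = true) := by
          simp [hv]
        have := h hvmem
        simp only [Finset.mem_filter, Finset.mem_univ, true_and] at this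
        rw [hs', Function.update_self] at this; exact Bool.noConfusion this
    have hcard : (Fset G s).card ≤ (Fset G s').card := Finset.card_le_card hsub
    have hmul : (N + 1) * (N - (Fset G s').card) ≤ (N + 1) * (N - (Fset G s).card) :=
      Nat.mul_le_mul_left _ (by omega)
    simp only [phi, ← hN]
    omega

theorem stmt_10 (G : SimpleGraph V) [DecidableRel G.Adj] :
    -- there is no infinite execution: every maximal execution is finite,
    -- hence ends in a configuration with no enabled vertex
    (¬ ∃ c : ℕ → V → Bool, ∀ i, ∃ v, Step G (c i) (c (i + 1)) v) ∧
    -- in any terminal configuration, the In-set is a maximal distance-2 independent set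
    (∀ s : V → Bool, (∀ v, ¬ Enabled G s v) →
      Dist2Indep G {v | s v = true} ∧
        ∀ T : Set V, {v | s v = true} ⊂ T → ¬ Dist2Indep G T) := by
  constructor
  · -- termination
    rintro ⟨c, hc⟩
    have key : ∀ i, phi G (c (i + 1)) < phi G (c i) := by
      intro i
      obtain ⟨v, hv⟩ := hc i
      exact step_phi_lt hv
    have hdesc : ∀ i, phi G (c i) + i ≤ phi G (c 0) := by
      intro i
      induction i with
      | zero => simp
      | succ n ih => have := key n; omega
    have := hdesc (phi G (c 0) + 1)
    omega
  · intro s hterm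
    constructor
    · -- distance-2 independence
      intro u hu v hv huv
      by_contra hlt
      push_neg at hlt
      have hu' : s u = true := hu
      have hv' : s v = true := hv
      have hnt : G.edist u v ≠ ⊤ := fun h => by rw [h] at hlt; exact absurd hlt (by simp)
      obtain ⟨p, hp⟩ := SimpleGraph.exists_walk_of_edist_ne_top hnt
      have hplen : p.length ≤ 2 := by
        have : (p.length : ℕ∞) ≤ 2 := hp ▸ hlt
        exact_mod_cast this
      cases p with
      | nil => exact huv rfl
      | cons h q =>
        rename_i x
        cases q with
        | nil =>
          -- u adjacent to v
          exact hterm u (Or.inr ⟨hu', v, h, Or.inl hv'⟩)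
        | cons h2 q2 =>
          rename_i y
          have hq2 : q2.length = 0 := by
            simp only [SimpleGraph.Walk.length_cons] at hplen
            omega
          have hyv : y = v := q2.eq_of_length_eq_zero hq2
          have hxu : G.Adj x u := h.symm
          have hxv : G.Adj x v := hyv ▸ h2
          have h2le : 1 < expIn G s x :=
            two_le_expIn hxu hxv hu' hv' huv
          exact hterm u (Or.inr ⟨hu', x, h, Or.inr h2le⟩)
    · -- maximality
      intro T hT hTi
      obtain ⟨t, htT, hts⟩ := Set.exists_of_ssubset hT
      have hts' : s t = false := by
        simp only [Set.mem_setOf_eq] at hts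
        exact Bool.not_eq_true _ ▸ (by simpa using hts)
      apply hterm t
      left
      refine ⟨hts', ?_⟩
      intro u hu
      have hadj : G.Adj t u := hu
      constructor
      · -- s u = false
        by_contra hsu
        have hsu' : s u = true := by
          cases h : s u
          · exact absurd h hsu
          · rfl
        have huT : u ∈ T := hT.1 hsu'
        have htu : t ≠ u := G.ne_of_adj hadj
        have := hTi t htT u huT htu
        have hle : G.edist t u ≤ 1 := by
          have := SimpleGraph.edist_le hadj.toWalk
          simpa using this
        have : (2 : ℕ∞) < 1 := lt_of_lt_of_le this hle
        exact absurd this (by simp)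
      · -- expIn u = 0
        rw [expIn_eq_zero_iff]
        intro x hx
        by_contra hsx
        have hsx' : s x = true := by
          cases h : s x
          · exact absurd h hsx
          · rfl
        have hadj2 : G.Adj u x := (SimpleGraph.mem_neighborFinset _ _ _).mp hx
        have hxT : x ∈ T := hT.1 hsx'
        have htx : t ≠ x := by
          rintro rfl
          rw [hts'] at hsx'; exact Bool.noConfusion hsx'
        have := hTi t htT x hxT htx
        have hle : G.edist t x ≤ 2 := by
          have hw := SimpleGraph.edist_le (SimpleGraph.Walk.cons hadj hadj2.toWalk)
          simpa using hw
        have : (2 : ℕ∞) < 2 := lt_of_lt_of_le this hle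
        exact absurd this (by simp)
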